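/- arXiv:0803.4361 — 5 statements merged into one kernel-verified Lean document; each statement's English description precedes it below -/
import Mathlib

section
/- Let A and T be bounded operators on a complex Banach space X. If A has T-stable spectrum, then T is quasinilpotent, i.e. r(T) = 0. -/
/-!
Fix `ρ > r(A)` and `ε > 0`, and put `s = ρ / ε`. On the compact circle `|λ| = s` every
`A + λT` has spectral radius `< ρ`, so the resolvents `(1 - z(A + λT))⁻¹`, `|z| = 1/ρ`, are
uniformly bounded, and Cauchy's estimate gives `‖(A + λT)ⁿ‖ ≤ C ρⁿ` uniformly in `λ`. As
`Tⁿ` is the leading coefficient of the polynomial `λ ↦ (A + λT)ⁿ`, the maximum modulus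
principle then yields `‖Tⁿ‖ ≤ C ρⁿ / sⁿ = C εⁿ`, whence `r(T) ≤ ε`.
-/

open Metric Filter Topology
open scoped NNReal ENNReal

section

variable {A : Type*} [NormedRing A] [NormedAlgebra ℂ A]

theorem norm_pow_le_of_forall_norm_add_smul_pow_le {x y : A} {n : ℕ} {s C : ℝ} (hs : 0 < s)
    (h : ∀ lam : ℂ, ‖lam‖ = s → ‖(x + lam • y) ^ n‖ ≤ C) : ‖y ^ n‖ ≤ C / s ^ n := by
  -- `μ ↦ (μ • x + y) ^ n` is `y ^ n` at `0` and `μ ^ n • (x + μ⁻¹ • y) ^ n` elsewhere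
  have hdiff : Differentiable ℂ fun μ : ℂ => (μ • x + y) ^ n := by fun_prop
  have := Complex.norm_le_of_forall_mem_frontier_norm_le isBounded_ball hdiff.diffContOnCl
    (U := ball 0 s⁻¹) (C := C / s ^ n) ?_ (subset_closure (mem_ball_self (inv_pos.2 hs)))
  · simpa using this
  rw [frontier_ball _ (inv_ne_zero hs.ne')]
  intro μ hμ
  rw [mem_sphere_zero_iff_norm] at hμ
  have hμ0 : μ ≠ 0 := norm_ne_zero_iff.mp (by rw [hμ]; positivity)
  rw [show μ • x + y = μ • (x + μ⁻¹ • y) by rw [smul_add, smul_inv_smul₀ hμ0], smul_pow,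
    norm_smul, norm_pow, hμ, inv_pow, div_eq_inv_mul]
  gcongr
  exact h _ (by rw [norm_inv, hμ, inv_inv])

theorem HasFPowerSeriesAt.norm_le_of_forall_mem_sphere_norm_le {E : Type*} [NormedAddCommGroup E]
    [NormedSpace ℂ E] [CompleteSpace E] {f : ℂ → E} {p : FormalMultilinearSeries ℂ ℂ E} {c : ℂ}
    (hp : HasFPowerSeriesAt f p c) {R : ℝ≥0} (hR : 0 < R)
    (hf : DifferentiableOn ℂ f (closedBall c R)) {C : ℝ} (hC : ∀ z ∈ sphere c R, ‖f z‖ ≤ C)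
    (n : ℕ) : ‖p n‖ ≤ C / R ^ n := by
  rw [hp.eq_formalMultilinearSeries (hf.hasFPowerSeriesOnBall hR).hasFPowerSeriesAt]
  have hcont : Continuous fun θ => f (circleMap c R θ) :=
    hf.continuousOn.comp_continuous (continuous_circleMap c R)
      fun θ => sphere_subset_closedBall (circleMap_mem_sphere c R.coe_nonneg θ)
  have hint : ∫ θ in (0)..2 * Real.pi, ‖f (circleMap c R θ)‖ ≤ 2 * Real.pi * C := by
    calc ∫ θ in (0)..2 * Real.pi, ‖f (circleMap c R θ)‖
        ≤ ∫ _ in (0)..2 * Real.pi, C :=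
          intervalIntegral.integral_mono_on Real.two_pi_pos.le
            (hcont.norm.intervalIntegrable _ _) intervalIntegrable_const
            fun θ _ => hC _ (circleMap_mem_sphere c R.coe_nonneg θ)
      _ = 2 * Real.pi * C := by simp
  calc ‖cauchyPowerSeries f c R n‖
      ≤ ((2 * Real.pi)⁻¹ * ∫ θ in (0)..2 * Real.pi, ‖f (circleMap c R θ)‖) * |(R : ℝ)|⁻¹ ^ n :=
        norm_cauchyPowerSeries_le f c R n
    _ ≤ ((2 * Real.pi)⁻¹ * (2 * Real.pi * C)) * |(R : ℝ)|⁻¹ ^ n := by gcongr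
    _ = C / R ^ n := by
        rw [abs_of_nonneg R.coe_nonneg, inv_mul_cancel_left₀ Real.two_pi_pos.ne', inv_pow,
          div_eq_mul_inv]

variable [CompleteSpace A]

theorem norm_pow_le_of_forall_norm_inverse_one_sub_smul_le {x : A} {t : ℝ≥0} (ht : 0 < t)
    (htx : (t : ℝ≥0∞) < (spectralRadius ℂ x)⁻¹) {C : ℝ}
    (hC : ∀ z ∈ sphere (0 : ℂ) t, ‖Ring.inverse (1 - z • x)‖ ≤ C) (n : ℕ) :
    ‖x ^ n‖ ≤ C / t ^ n := by
  have hp := (spectrum.hasFPowerSeriesOnBall_inverse_one_sub_smul ℂ x).hasFPowerSeriesAt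
  simpa [ContinuousMultilinearMap.norm_mkPiRing] using
    hp.norm_le_of_forall_mem_sphere_norm_le ht
      (spectrum.differentiableOn_inverse_one_sub_smul htx) hC n

theorem IsCompact.exists_norm_inverse_one_sub_smul_le {K : Set A} (hK : IsCompact K) {t : ℝ≥0}
    (htK : ∀ x ∈ K, (t : ℝ≥0∞) < (spectralRadius ℂ x)⁻¹) :
    ∃ C, ∀ x ∈ K, ∀ z ∈ sphere (0 : ℂ) t, ‖Ring.inverse (1 - z • x)‖ ≤ C := by
  have hcont : ContinuousOn (fun p : ℂ × A => Ring.inverse (1 - p.1 • p.2))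
      (sphere (0 : ℂ) t ×ˢ K) := by
    rintro ⟨z, x⟩ ⟨hz, hx⟩
    rw [mem_sphere_zero_iff_norm] at hz
    have hu : IsUnit (1 - z • x) := spectrum.isUnit_one_sub_smul_of_lt_inv_radius <| by
      rw [show ‖z‖₊ = t from NNReal.eq hz]
      exact htK x hx
    exact ((NormedRing.inverse_continuousAt hu.unit).comp_of_eq
      (f := fun p : ℂ × A => 1 - p.1 • p.2) (by fun_prop) hu.unit_spec.symm).continuousWithinAt
  obtain ⟨C, hC⟩ := ((isCompact_sphere _ _).prod hK).exists_bound_of_continuousOn hcont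
  exact ⟨C, fun x hx z hz => hC (z, x) ⟨hz, hx⟩⟩

theorem IsCompact.exists_norm_pow_le_mul_pow {K : Set A} (hK : IsCompact K) {ρ : ℝ≥0}
    (hρ : 0 < ρ) (hρK : ∀ x ∈ K, spectralRadius ℂ x < ρ) :
    ∃ C, ∀ x ∈ K, ∀ n : ℕ, ‖x ^ n‖ ≤ C * ρ ^ n := by
  have htK : ∀ x ∈ K, ((ρ⁻¹ : ℝ≥0) : ℝ≥0∞) < (spectralRadius ℂ x)⁻¹ := fun x hx => by
    rw [ENNReal.coe_inv hρ.ne']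
    exact ENNReal.inv_lt_inv.mpr (hρK x hx)
  obtain ⟨C, hC⟩ := hK.exists_norm_inverse_one_sub_smul_le htK
  refine ⟨C, fun x hx n => ?_⟩
  simpa [div_eq_mul_inv] using
    norm_pow_le_of_forall_norm_inverse_one_sub_smul_le (inv_pos.2 hρ) (htK x hx) (hC x hx) n

theorem spectralRadius_le_of_forall_norm_pow_le {y : A} {C : ℝ} {δ : ℝ≥0}
    (h : ∀ n : ℕ, ‖y ^ n‖ ≤ C * δ ^ n) : spectralRadius ℂ y ≤ δ := by
  -- `max C 1 > 0`, so that its `n`-th roots tend to `1`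
  set C' := max C 1
  have hlim : Tendsto (fun n : ℕ => ENNReal.ofReal (C' ^ (1 / n : ℝ) * δ)) atTop (𝓝 δ) := by
    have : Tendsto (fun n : ℕ => C' ^ (1 / n : ℝ)) atTop (𝓝 1) := by
      simpa using tendsto_const_nhds.rpow tendsto_one_div_atTop_nhds_zero_nat
        (Or.inl (by positivity : C' ≠ 0))
    simpa using ENNReal.tendsto_ofReal (this.mul_const (δ : ℝ))
  refine le_of_tendsto_of_tendsto (spectrum.pow_norm_pow_one_div_tendsto_nhds_spectralRadius y)
    hlim ?_
  filter_upwards [eventually_ge_atTop 1] with n hn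
  refine ENNReal.ofReal_le_ofReal ?_
  calc ‖y ^ n‖ ^ (1 / n : ℝ) ≤ (C' * δ ^ n) ^ (1 / n : ℝ) := by
        gcongr
        exact (h n).trans (by gcongr; exact le_max_left _ _)
    _ = C' ^ (1 / n : ℝ) * δ := by
        rw [Real.mul_rpow (by positivity) (by positivity), one_div,
          Real.pow_rpow_inv_natCast δ.coe_nonneg (by omega)]

end

/-- If `A` has `T`-stable spectrum (i.e. `r(A + λT) ≤ r(A)` for all `λ ∈ ℂ`),
then `T` is quasinilpotent. -/
theorem stable_spectrum_quasinilpotent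
    {X : Type*} [NormedAddCommGroup X] [NormedSpace ℂ X] [CompleteSpace X]
    (A T : X →L[ℂ] X)
    (hstable : ∀ lam : ℂ, spectralRadius ℂ (A + lam • T) ≤ spectralRadius ℂ A) :
    spectralRadius ℂ T = 0 := by
  nontriviality X
  set ρ : ℝ≥0 := ‖A‖₊ + 1
  have hρ : 0 < ρ := by positivity
  have hAρ : spectralRadius ℂ A < ρ :=
    (spectrum.spectralRadius_le_nnnorm A).trans_lt (by exact_mod_cast lt_add_one _)
  refine nonpos_iff_eq_zero.mp (ENNReal.le_of_forall_pos_le_add fun ε hε _ => ?_)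
  rw [zero_add]
  set s : ℝ≥0 := ρ / ε
  have hs : 0 < s := by positivity
  obtain ⟨C, hC⟩ := ((isCompact_sphere (0 : ℂ) s).image
    (by fun_prop : Continuous fun lam : ℂ => A + lam • T)).exists_norm_pow_le_mul_pow hρ
      (by rintro _ ⟨lam, -, rfl⟩; exact (hstable lam).trans_lt hAρ)
  refine spectralRadius_le_of_forall_norm_pow_le (C := C) fun n => ?_
  calc ‖T ^ n‖ ≤ C * ρ ^ n / s ^ n :=
        norm_pow_le_of_forall_norm_add_smul_pow_le (x := A) hs
          fun lam hlam => hC _ ⟨lam, by simpa using hlam, rfl⟩ n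
    _ = C * ε ^ n := by
        simp only [s, NNReal.coe_div, div_pow]
        field_simp
end

section
/- Let n ≥ 1 and let f : ℂ → Mₙ(ℂ) be an entire (holomorphic on all of ℂ) matrix-valued function. Suppose there exists λ₀ ∈ ℂ such that σ(f(λ)) = σ(f(λ₀)) for every λ ∈ ℂ. Then tr(f(λ)) = tr(f(λ₀)) for every λ ∈ ℂ. -/
/-!
The trace is the sum of the `n` eigenvalues counted with multiplicity, so it always lies in the
finite set of sums of `n`-tuples drawn from the spectrum. When the spectrum is constant this set
does not move, and a continuous function on the connected plane with values in a finite set is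
constant.
-/

open Set

theorem Multiset.exists_map_univ_val_eq {ι α : Type*} [Fintype ι] (s : Multiset α)
    (h : Fintype.card ι = Multiset.card s) : ∃ v : ι → α, Finset.univ.val.map v = s := by
  induction s using Quotient.inductionOn with
  | h l =>
    let e : ι ≃ Fin l.length := Fintype.equivFinOfCardEq h
    refine ⟨l.get ∘ e, ?_⟩
    rw [← Multiset.map_map, Multiset.map_univ_val_equiv, Fin.univ_val_map, List.ofFn_get]
    rfl

namespace Matrix

variable {n K : Type*} [Fintype n] [DecidableEq n] [Field K] [IsAlgClosed K]

theorem trace_mem_image_sum_pi_spectrum (A : Matrix n n K) :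
    A.trace ∈ (fun v : n → K => ∑ i, v i) '' univ.pi fun _ => spectrum K A := by
  have hcard : Fintype.card n = Multiset.card A.charpoly.roots := by
    rw [IsAlgClosed.card_roots_eq_natDegree, charpoly_natDegree_eq_dim]
  obtain ⟨v, hv⟩ := A.charpoly.roots.exists_map_univ_val_eq hcard
  refine ⟨v, fun i _ => ?_, ?_⟩
  · have hroot : v i ∈ A.charpoly.roots := hv ▸ Multiset.mem_map_of_mem v (Finset.mem_univ i)
    exact mem_spectrum_of_isRoot_charpoly (Polynomial.isRoot_of_mem_roots hroot)
  · rw [trace_eq_sum_roots_charpoly, ← hv]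
    rfl

theorem trace_eq_of_continuous_of_spectrum_eq {X : Type*} [TopologicalSpace X]
    [PreconnectedSpace X] [TopologicalSpace K] [ContinuousAdd K] [T1Space K]
    {f : X → Matrix n n K} (hf : Continuous f) {x₀ : X}
    (hspec : ∀ x, spectrum K (f x) = spectrum K (f x₀)) (x : X) :
    (f x).trace = (f x₀).trace := by
  let sums := (fun v : n → K => ∑ i, v i) '' univ.pi fun _ => spectrum K (f x₀)
  have hfin : sums.Finite := (Set.Finite.pi fun _ => (f x₀).finite_spectrum).image _
  have hmaps : MapsTo (fun x => (f x).trace) univ sums :=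
    fun x _ => by simpa only [hspec x] using (f x).trace_mem_image_sum_pi_spectrum
  exact isPreconnected_univ.constant_of_mapsTo hfin.isDiscrete hf.matrix_trace.continuousOn
    hmaps (mem_univ x) (mem_univ x₀)

end Matrix

theorem entire_const_spectrum_const_trace_general
    (n : ℕ) (f : ℂ → Matrix (Fin n) (Fin n) ℂ)
    (hf : ∀ i j : Fin n, Differentiable ℂ (fun lam : ℂ => f lam i j))
    (lam₀ : ℂ) (hspec : ∀ lam : ℂ, spectrum ℂ (f lam) = spectrum ℂ (f lam₀)) :
    ∀ lam : ℂ, Matrix.trace (f lam) = Matrix.trace (f lam₀) :=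
  Matrix.trace_eq_of_continuous_of_spectrum_eq
    (continuous_matrix fun i j => (hf i j).continuous) hspec

/-- If `f : ℂ → Mₙ(ℂ)` is entire (each entry is an entire function) and the spectrum
of `f(λ)` is constant, then the trace of `f(λ)` is constant. -/
theorem entire_const_spectrum_const_trace
    (n : ℕ) (hn : 1 ≤ n) (f : ℂ → Matrix (Fin n) (Fin n) ℂ)
    (hf : ∀ i j : Fin n, Differentiable ℂ (fun lam : ℂ => f lam i j))
    (lam₀ : ℂ) (hspec : ∀ lam : ℂ, spectrum ℂ (f lam) = spectrum ℂ (f lam₀)) :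
    ∀ lam : ℂ, Matrix.trace (f lam) = Matrix.trace (f lam₀) :=
  entire_const_spectrum_const_trace_general n f hf lam₀ hspec
end

section
/- Let A and B be n × n complex matrices such that A has B-stable spectrum, i.e. the spectral radius satisfies r(A + λB) ≤ r(A) for every λ ∈ ℂ. Then tr(AᵏB) = 0 and tr(ABᵏ) = 0 for every integer k ≥ 1. -/
/-!
The function `p(λ) = tr((A + λB)^(k+1))` is a polynomial in `λ`, and its coefficient of `λ` is
`(k+1) tr(AᵏB)`. The eigenvalues of `(A + λB)^(k+1)` are the `(k+1)`-st powers of those of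
`A + λB`, which by stability have modulus at most `r(A)`; so `|p(λ)| ≤ n r(A)^(k+1)` and, by
Liouville, `p` is constant. Since `B + λA = λ(A + λ⁻¹B)`, the polynomial `tr((B + λA)^(k+1))` is
then `p(0) λ^(k+1)`, whose coefficient of `λ`, namely `(k+1) tr(BᵏA)`, vanishes as well.
-/

open Polynomial Finset

theorem Polynomial.coeff_one_C_add_X_mul_C_pow {R : Type*} [Semiring R] (a b : R) (m : ℕ) :
    ((C a + X * C b) ^ (m + 1)).coeff 1 = ∑ p ∈ antidiagonal m, a ^ p.1 * b * a ^ p.2 := by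
  induction m with
  | zero => simp
  | succ m ih =>
    have hconst : ((C a + X * C b) ^ (m + 1)).coeff 0 = a ^ (m + 1) := by
      rw [← constantCoeff_apply, map_pow]
      simp
    rw [pow_succ, mul_add, ← mul_assoc, coeff_add, coeff_mul_C, coeff_mul_C, coeff_mul_X, ih,
      hconst, Nat.sum_antidiagonal_succ', sum_mul]
    simp [pow_succ, mul_assoc, add_comm]

theorem Polynomial.eq_C_of_forall_norm_eval_le {p : ℂ[X]} {M : ℝ} (h : ∀ z, ‖p.eval z‖ ≤ M) :
    p = C (p.eval 0) := by
  have hb : Bornology.IsBounded (Set.range p.eval) :=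
    isBounded_iff_forall_norm_le.mpr ⟨M, by rintro _ ⟨z, rfl⟩; exact h z⟩
  exact Polynomial.funext fun z => by
    rw [eval_C, p.differentiable.apply_eq_apply_of_bounded hb z 0]

theorem spectrum.norm_le_toReal_of_spectralRadius_le {𝕜 A : Type*} [NormedField 𝕜] [Ring A]
    [Algebra 𝕜 A] {a : A} {r : ENNReal} (hr : r ≠ ⊤) (ha : spectralRadius 𝕜 a ≤ r) {μ : 𝕜}
    (hμ : μ ∈ spectrum 𝕜 a) : ‖μ‖ ≤ r.toReal :=
  ENNReal.toReal_mono hr <|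
    (le_iSup₂ (f := fun μ (_ : μ ∈ spectrum 𝕜 a) => (‖μ‖₊ : ENNReal)) μ hμ).trans ha

namespace Matrix

section Pencil

variable {n R : Type*} [CommRing R]

noncomputable def pencil (A B : Matrix n n R) : Matrix n n R[X] :=
  A.map C + (X : R[X]) • B.map C

theorem pencil_map_eval (A B : Matrix n n R) (t : R) : (pencil A B).map (eval t) = A + t • B := by
  ext i j
  simp only [pencil, map_apply, add_apply, smul_apply, eval_add, eval_C, smul_eq_mul, eval_mul,
    eval_X]

variable [Fintype n] [DecidableEq n]

theorem trace_sum_antidiagonal_pow_mul_pow (A B : Matrix n n R) (m : ℕ) :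
    (∑ p ∈ antidiagonal m, A ^ p.1 * B * A ^ p.2).trace = (m + 1) * (A ^ m * B).trace := by
  have hterm : ∀ p ∈ antidiagonal m, (A ^ p.1 * B * A ^ p.2).trace = (A ^ m * B).trace := by
    rintro ⟨i, j⟩ hij
    rw [trace_mul_comm, ← Matrix.mul_assoc, ← pow_add, add_comm, mem_antidiagonal.mp hij]
  rw [trace_sum, sum_congr rfl hterm, sum_const, Nat.card_antidiagonal, nsmul_eq_mul]
  push_cast
  ring

theorem trace_coeff_matPolyEquiv (M : Matrix n n R[X]) (k : ℕ) :
    ((matPolyEquiv M).coeff k).trace = M.trace.coeff k := by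
  rw [← lcoeff_apply (n := k) M.trace, AddMonoidHom.map_trace]
  congr 1
  ext i j
  simp

theorem matPolyEquiv_pencil (A B : Matrix n n R) : matPolyEquiv (pencil A B) = C A + X * C B := by
  simp [pencil]

theorem eval_trace_pencil_pow (A B : Matrix n n R) (m : ℕ) (t : R) :
    ((pencil A B ^ m).trace).eval t = ((A + t • B) ^ m).trace := by
  rw [← coe_evalRingHom, AddMonoidHom.map_trace, ← RingHom.mapMatrix_apply, map_pow,
    RingHom.mapMatrix_apply, coe_evalRingHom, pencil_map_eval]

theorem coeff_one_trace_pencil_pow (A B : Matrix n n R) (m : ℕ) :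
    ((pencil A B ^ (m + 1)).trace).coeff 1 = (m + 1) * (A ^ m * B).trace := by
  rw [← trace_coeff_matPolyEquiv, map_pow, matPolyEquiv_pencil, coeff_one_C_add_X_mul_C_pow,
    trace_sum_antidiagonal_pow_mul_pow]

theorem trace_pencil_pow_swap_of_eq_C {K : Type*} [Field K] [Infinite K] {A B : Matrix n n K}
    {m : ℕ} {c : K} (h : (pencil A B ^ m).trace = C c) :
    (pencil B A ^ m).trace = C c * X ^ m := by
  refine eq_of_infinite_eval_eq _ _ <|
    (Set.finite_singleton 0).infinite_compl.mono fun t (ht : t ≠ 0) => ?_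
  have hscale : B + t • A = t • (A + t⁻¹ • B) := by
    rw [smul_add, smul_smul, mul_inv_cancel₀ ht, one_smul, add_comm]
  have heval : ((pencil B A ^ m).trace).eval t = t ^ m * ((pencil A B ^ m).trace).eval t⁻¹ := by
    rw [eval_trace_pencil_pow, eval_trace_pencil_pow, hscale, _root_.smul_pow, trace_smul,
      smul_eq_mul]
  rw [h, eval_C] at heval
  rw [Set.mem_ofPred_eq, heval, eval_mul, eval_C, eval_pow, eval_X, mul_comm]

end Pencil

section Spectrum

variable {n 𝕜 : Type*} [Fintype n] [DecidableEq n] [NormedField 𝕜]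

theorem spectralRadius_ne_top (A : Matrix n n 𝕜) : spectralRadius 𝕜 A ≠ ⊤ := by
  obtain ⟨R, hR⟩ := (A.finite_spectrum.image (‖·‖₊)).bddAbove
  refine ne_top_of_le_ne_top (ENNReal.coe_ne_top (r := R)) (iSup₂_le fun μ hμ => ?_)
  exact ENNReal.coe_le_coe.mpr (hR ⟨μ, hμ, rfl⟩)

theorem norm_trace_pow_le [IsAlgClosed 𝕜] (N : Matrix n n 𝕜) {R : ℝ}
    (hR : ∀ μ ∈ spectrum 𝕜 N, ‖μ‖ ≤ R) {m : ℕ} (hm : m ≠ 0) :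
    ‖(N ^ m).trace‖ ≤ Fintype.card n * R ^ m := by
  have hroot : ∀ z ∈ (N ^ m).charpoly.roots, ‖z‖ ≤ R ^ m := by
    intro z hz
    rw [mem_roots', ← mem_spectrum_iff_isRoot_charpoly, spectrum.map_pow_of_pos _ hm.bot_lt] at hz
    obtain ⟨μ, hμ, rfl⟩ := hz.2
    rw [norm_pow]
    exact pow_le_pow_left₀ (norm_nonneg μ) (hR μ hμ) m
  calc ‖(N ^ m).trace‖ = ‖(N ^ m).charpoly.roots.sum‖ := by rw [trace_eq_sum_roots_charpoly]
    _ ≤ ((N ^ m).charpoly.roots.map norm).sum := norm_multiset_sum_le _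
    _ ≤ Multiset.card (N ^ m).charpoly.roots • R ^ m := by
      rw [← Multiset.card_map norm]
      refine Multiset.sum_le_card_nsmul _ _ fun x hx => ?_
      obtain ⟨z, hz, rfl⟩ := Multiset.mem_map.mp hx
      exact hroot z hz
    _ = Fintype.card n * R ^ m := by
      rw [IsAlgClosed.card_roots_eq_natDegree, charpoly_natDegree_eq_dim, nsmul_eq_mul]

end Spectrum

end Matrix

open Matrix

/-- If the `n × n` matrix `A` has `B`-stable spectrum, then `tr(AᵏB) = tr(ABᵏ) = 0`
for every `k ≥ 1`. -/
theorem stable_spectrum_trace_zero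
    {n : ℕ} (A B : Matrix (Fin n) (Fin n) ℂ)
    (hstable : ∀ lam : ℂ, spectralRadius ℂ (A + lam • B) ≤ spectralRadius ℂ A) :
    ∀ k : ℕ, 1 ≤ k → Matrix.trace (A ^ k * B) = 0 ∧ Matrix.trace (A * B ^ k) = 0 := by
  intro k hk
  have hbound : ∀ t, ‖((pencil A B ^ (k + 1)).trace).eval t‖
      ≤ n * (spectralRadius ℂ A).toReal ^ (k + 1) := fun t => by
    simpa [eval_trace_pencil_pow] using norm_trace_pow_le (A + t • B) (fun μ hμ =>
      spectrum.norm_le_toReal_of_spectralRadius_le A.spectralRadius_ne_top (hstable t) hμ)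
      k.succ_ne_zero
  have hconst := eq_C_of_forall_norm_eval_le hbound
  have hswap := trace_pencil_pow_swap_of_eq_C hconst
  have hcast : (k + 1 : ℂ) ≠ 0 := by exact_mod_cast k.succ_ne_zero
  constructor
  · have hcoeff := coeff_one_trace_pencil_pow A B k
    rw [hconst, coeff_C_of_ne_zero one_ne_zero] at hcoeff
    exact (mul_eq_zero.mp hcoeff.symm).resolve_left hcast
  · have hcoeff := coeff_one_trace_pencil_pow B A k
    rw [hswap, coeff_C_mul_X_pow, if_neg (by omega), trace_mul_comm] at hcoeff
    exact (mul_eq_zero.mp hcoeff.symm).resolve_left hcast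
end

section
/- Let n ≥ 2 and let L ⊆ Mₙ(ℂ) be a Lie algebra of matrices, i.e. a linear subspace closed under the commutator [A,B] = AB − BA. If tr(FGH) = tr(FHG) for all F, G, H ∈ L, then L is reducible: there exists a linear subspace W of ℂⁿ with W ≠ {0} and W ≠ ℂⁿ such that F(W) ⊆ W for every F ∈ L. -/
/-!
The hypothesis says that the trace form `(F, G) ↦ tr (F G)` of the natural representation vanishes
on `L × ⁅L, L⁆`. Cartan's criterion, in its version for a faithful representation, then makes `L`
solvable, and Lie's theorem yields a common eigenvector of `L`. Its line is invariant under `L`,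
and it is a proper subspace because `n ≥ 2`.
-/

open LieAlgebra LieModule Module

attribute [local instance 100] LieRing.ofAssociativeRing

section CartanCriterion

variable {R L M : Type*} [CommRing R] [LieRing L] [LieAlgebra R L]
  [AddCommGroup M] [Module R M] [LieRingModule L M] [LieModule R L M]

theorem LieAlgebra.isSolvable_of_isSolvable_derivedSeries_one
    [IsSolvable (derivedSeries R L 1)] : IsSolvable L := by
  obtain ⟨k, hk⟩ := IsSolvable.solvable R (derivedSeries R L 1)
  rw [LieIdeal.derivedSeries_eq_bot_iff, derivedSeries_def, ← derivedSeriesOfIdeal_add] at hk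
  exact IsSolvable.mk hk

instance LieIdeal.isFaithful [IsFaithful R L M] (I : LieIdeal R L) : IsFaithful R I M :=
  inferInstanceAs (IsFaithful R (I : LieSubalgebra R L) M)

theorem LieModule.isNilpotent_ad_of_isNilpotent_toEnd [IsFaithful R L M] {x : L}
    (h : _root_.IsNilpotent (toEnd R L M x)) : _root_.IsNilpotent (ad R L x) := by
  obtain ⟨k, hk⟩ := ad_nilpotent_of_nilpotent (R := R) h
  have hcomm : (ad R (End R M) (toEnd R L M x)).comp (toEnd R L M : L →ₗ[R] End R M) =
      (toEnd R L M : L →ₗ[R] End R M).comp (ad R L x) := by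
    ext y : 1
    simp
  refine ⟨k, LinearMap.ext fun y => IsFaithful.injective_toEnd (R := R) (M := M) ?_⟩
  simpa [hk] using congr($(Module.End.commute_pow_left_of_commute hcomm k) y).symm

theorem LieModule.traceForm_apply_eq_zero_of_mem_derivedSeries_one
    (h : ∀ x y z : L, traceForm R L M x ⁅y, z⁆ = 0) (x : L) {y : L}
    (hy : y ∈ derivedSeries R L 1) : traceForm R L M x y = 0 := by
  replace hy : y ∈ Submodule.span R {⁅a, b⁆ | (a : L) (b : L)} := by
    rwa [← coe_derivedSeries_one_eq]
  induction hy using Submodule.span_induction with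
  | mem _ hy => obtain ⟨a, b, rfl⟩ := hy; exact h x a b
  | zero => simp
  | add _ _ _ _ ha hb => simp [ha, hb]
  | smul _ _ _ hy => simp [hy]

variable [CharZero R] [IsDomain R] [IsNoetherian R L] [IsNoetherian R M] [Module.Free R M]

theorem LieModule.isSolvable_of_traceForm_apply_lie_eq_zero [IsFaithful R L M]
    (h : ∀ x, ∀ y ∈ derivedSeries R L 1, traceForm R L M x y = 0) : IsSolvable L := by
  set D := derivedSeries R L 1
  have hD : traceForm R D M = 0 := by
    ext ⟨x, -⟩ ⟨y, hy⟩
    exact h x y hy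
  have hDD : LieModule.IsNilpotent (derivedSeries R D 1) M :=
    isNilpotent_derivedSeries_of_traceForm_eq_zero hD
  have : LieRing.IsNilpotent (derivedSeries R D 1) := by
    rw [LieAlgebra.isNilpotent_iff_forall (R := R)]
    exact fun x => isNilpotent_ad_of_isNilpotent_toEnd (M := M)
      ((isNilpotent_iff_forall' (R := R)).mp hDD x)
  have : IsSolvable D := isSolvable_of_isSolvable_derivedSeries_one (R := R)
  exact isSolvable_of_isSolvable_derivedSeries_one (R := R)

end CartanCriterion

theorem LieModule.exists_lieSubmodule_finrank_eq_one (k L V : Type*) [Field k] [IsAlgClosed k]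
    [CharZero k] [LieRing L] [LieAlgebra k L] [IsSolvable L] [AddCommGroup V] [Module k V]
    [LieRingModule L V] [LieModule k L V] [FiniteDimensional k V] [Nontrivial V] :
    ∃ N : LieSubmodule k L V, finrank k N = 1 := by
  obtain ⟨χ, hχ⟩ := exists_nontrivial_weightSpace_of_isSolvable k L V
  obtain ⟨⟨v, hv⟩, hv0⟩ := exists_ne (0 : weightSpace V χ)
  refine ⟨{ (k ∙ v) with lie_mem := fun {x w} hw => ?_ }, finrank_span_singleton ?_⟩
  · obtain ⟨c, rfl⟩ := Submodule.mem_span_singleton.mp hw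
    rw [lie_smul, (LieModule.mem_weightSpace χ v).mp hv x]
    exact Submodule.smul_mem _ _ (Submodule.smul_mem _ _ (Submodule.mem_span_singleton_self v))
  · simpa using hv0

theorem LieSubalgebra.traceForm_matrix_apply {R n : Type*} [CommRing R] [Fintype n]
    [DecidableEq n] (K : LieSubalgebra R (Matrix n n R)) (x y : K) :
    traceForm R K (n → R) x y = ((x : Matrix n n R) * y).trace := by
  rw [traceForm_apply_apply, LieSubalgebra.toEnd_eq, LieSubalgebra.toEnd_eq, toEnd_matrix]
  change LinearMap.trace R _ (Matrix.toLin' (x : Matrix n n R) ∘ₗ Matrix.toLin' (y : Matrix n n R))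
    = _
  rw [← Matrix.toLin'_mul, Matrix.trace_toLin'_eq]

/-- A matrix Lie algebra with `tr(FGH) = tr(FHG)` for all its elements is reducible. -/
theorem lie_algebra_symmetric_trace_reducible
    {n : ℕ} (hn : 2 ≤ n) (L : Submodule ℂ (Matrix (Fin n) (Fin n) ℂ))
    (hLie : ∀ A ∈ L, ∀ B ∈ L, A * B - B * A ∈ L)
    (htr : ∀ F ∈ L, ∀ G ∈ L, ∀ H ∈ L,
      Matrix.trace (F * G * H) = Matrix.trace (F * H * G)) :
    ∃ W : Submodule ℂ (Fin n → ℂ), W ≠ ⊥ ∧ W ≠ ⊤ ∧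
      ∀ F ∈ L, ∀ x ∈ W, F.mulVec x ∈ W := by
  let K : LieSubalgebra ℂ (Matrix (Fin n) (Fin n) ℂ) :=
    { L with lie_mem' := fun {A B} hA hB => by rw [Ring.lie_def]; exact hLie A hA B hB }
  have : IsSolvable K := by
    refine isSolvable_of_traceForm_apply_lie_eq_zero (M := Fin n → ℂ) fun x y hy =>
      traceForm_apply_eq_zero_of_mem_derivedSeries_one (R := ℂ) (fun F G H => ?_) x hy
    rw [LieSubalgebra.traceForm_matrix_apply, LieSubalgebra.coe_bracket, Ring.lie_def, mul_sub,
      Matrix.trace_sub, ← mul_assoc, ← mul_assoc, htr F F.2 G G.2 H H.2, sub_self]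
  have : NeZero n := ⟨by omega⟩
  obtain ⟨N, hN⟩ := exists_lieSubmodule_finrank_eq_one ℂ K (Fin n → ℂ)
  change finrank ℂ N.toSubmodule = 1 at hN
  refine ⟨N, fun h => ?_, fun h => ?_, fun F hF x hx => N.lie_mem (x := (⟨F, hF⟩ : K)) hx⟩
  · rw [h, finrank_bot] at hN
    exact zero_ne_one hN
  · rw [h, finrank_top, finrank_fin_fun] at hN
    omega
end

section
/- Let n ≥ 2 and let L ⊆ Mₙ(ℂ) be a Lie algebra of matrices, i.e. a linear subspace closed under the commutator [A,B] = AB − BA. If tr(F²) = 0 for every F ∈ L, then L is reducible: there exists a linear subspace W of ℂⁿ with W ≠ {0} and W ≠ ℂⁿ such that F(W) ⊆ W for every F ∈ L. -/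
/-!
Polarizing `tr(F²) = 0` shows that the trace form of `L` on `ℂⁿ` vanishes. By Cartan's criterion
`[L, L]` then acts on `ℂⁿ` by nilpotent matrices, so it is a nilpotent Lie algebra by Engel's
theorem and `L` is solvable. Lie's theorem gives a common eigenvector of `L`, whose span is a proper
invariant subspace because `n ≥ 2`.
-/

open LieModule LieAlgebra Module

attribute [local instance] LieRing.ofAssociativeRing

section

variable {K L M : Type*} [Field K] [LieRing L] [LieAlgebra K L]
  [AddCommGroup M] [Module K M] [FiniteDimensional K M] [LieRingModule L M] [LieModule K L M]

lemma LieAlgebra.isNilpotent_of_isFaithful [IsFaithful K L M] [IsNilpotent L M] :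
    LieRing.IsNilpotent L := by
  let e := LieEquiv.ofInjective _ (IsFaithful.injective_toEnd (R := K) (L := L) (M := M))
  rw [e.nilpotent_iff_equiv_nilpotent, LieAlgebra.isNilpotent_iff_forall (R := K)]
  rintro ⟨-, x, rfl⟩
  exact isNilpotent_ad_of_isNilpotent (isNilpotent_toEnd_of_isNilpotent K L M x)

lemma LieAlgebra.isSolvable_of_traceForm_eq_zero [CharZero K] [IsFaithful K L M]
    (h : traceForm K L M = 0) : IsSolvable L := by
  have : IsNilpotent (derivedSeries K L 1) M := isNilpotent_derivedSeries_of_traceForm_eq_zero h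
  have : IsFaithful K (derivedSeries K L 1) M :=
    inferInstanceAs (IsFaithful K (derivedSeries K L 1 : LieSubalgebra K L) M)
  have : LieRing.IsNilpotent (derivedSeries K L 1) := isNilpotent_of_isFaithful (K := K) (M := M)
  obtain ⟨k, hk⟩ := IsSolvable.solvable K (derivedSeries K L 1)
  rw [LieIdeal.derivedSeries_eq_bot_iff] at hk
  refine IsSolvable.mk (R := K) (k := k + 1) ?_
  rwa [derivedSeries_def, derivedSeriesOfIdeal_add]

lemma LieModule.exists_lieSubmodule_finrank_eq_one_s12 [CharZero K] [IsSolvable L]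
    [IsTriangularizable K L M] [Nontrivial M] : ∃ N : LieSubmodule K L M, finrank K N = 1 := by
  obtain ⟨χ, hχ⟩ := exists_nontrivial_weightSpace_of_isSolvable K L M
  obtain ⟨⟨v, hv⟩, hne⟩ := exists_ne (0 : weightSpace M χ)
  have hv0 : v ≠ 0 := by simpa using hne
  rw [mem_weightSpace] at hv
  refine ⟨{ toSubmodule := K ∙ v, lie_mem := ?_ }, finrank_span_singleton hv0⟩
  intro x w hw
  obtain ⟨c, rfl⟩ := Submodule.mem_span_singleton.mp hw
  rw [lie_smul, hv, smul_comm]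
  exact Submodule.smul_mem _ _ (Submodule.smul_mem _ _ (Submodule.mem_span_singleton_self v))

end

/-- A matrix Lie algebra with `tr(F²) = 0` for every element `F` is reducible. -/
theorem lie_algebra_trace_square_zero_reducible
    {n : ℕ} (hn : 2 ≤ n) (L : Submodule ℂ (Matrix (Fin n) (Fin n) ℂ))
    (hLie : ∀ A ∈ L, ∀ B ∈ L, A * B - B * A ∈ L)
    (htr : ∀ F ∈ L, Matrix.trace (F ^ 2) = 0) :
    ∃ W : Submodule ℂ (Fin n → ℂ), W ≠ ⊥ ∧ W ≠ ⊤ ∧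
      ∀ F ∈ L, ∀ x ∈ W, F.mulVec x ∈ W := by
  let 𝔏 : LieSubalgebra ℂ (Matrix (Fin n) (Fin n) ℂ) :=
    { L with lie_mem' := fun {A B} hA hB => hLie A hA B hB }
  have htrace : traceForm ℂ 𝔏 (Fin n → ℂ) = 0 := by
    refine LinearMap.BilinForm.ext_of_isSymm ⟨traceForm_comm ℂ 𝔏 _⟩ ⟨fun _ _ => rfl⟩ ?_
    rintro ⟨F, hF⟩
    simpa [traceForm_apply_apply, pow_two, ← Matrix.toLin'_mul] using htr F hF
  have : IsSolvable 𝔏 := isSolvable_of_traceForm_eq_zero htrace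
  have : Nontrivial (Fin n → ℂ) := Function.nontrivial (h := ⟨⟨0, by omega⟩⟩)
  obtain ⟨N, hN⟩ := exists_lieSubmodule_finrank_eq_one_s12 (K := ℂ) (L := 𝔏) (M := Fin n → ℂ)
  refine ⟨N, ?_, ?_, fun F hF x hx => N.lie_mem (x := (⟨F, hF⟩ : 𝔏)) hx⟩
  · rw [Ne, ← Submodule.finrank_eq_zero]
    exact hN.trans_ne one_ne_zero
  · intro h
    have : finrank ℂ (⊤ : Submodule ℂ (Fin n → ℂ)) = 1 := h ▸ hN
    rw [finrank_top, Module.finrank_fin_fun] at this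
    omega
end
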